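/- Equivalent characterization of viscosity subsolutions of the flat transmission problem: Let n ≥ 2, 0 < λ ≤ Λ, let F⁺, F⁻ ∈ E(λ,Λ), let f^± : B₁^± ∪ T → ℝ be continuous, and g : T → ℝ. An upper semicontinuous function u : B₁ → ℝ is a viscosity subsolution of the flat transmission problem [F^±(D²u) = f^± in B₁^±, u_{xₙ}⁺ − u_{xₙ}⁻ = g on T] if and only if it satisfies the interior condition (i) of the definition together with the following condition at the interface: for every x₀ ∈ T, δ > 0, and every φ continuous on B_δ(x₀), C² up to the boundary on closure(B_δ(x₀) ∩ {xₙ > 0}) and on closure(B_δ(x₀) ∩ {xₙ < 0}), touching u from above at x₀, at least one of the following holds: F⁺(D²φ⁺(x₀)) ≥ f⁺(x₀), or F⁻(D²φ⁻(x₀)) ≥ f⁻(x₀), or ∂_{xₙ}φ⁺(x₀) − ∂_{xₙ}φ⁻(x₀) ≥ g(x₀). -/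

import Mathlib

open Metric Set Filter Asymptotics MeasureTheory

noncomputable section

namespace Transmission

/-- `ℝ^d` as a Euclidean space. -/
abbrev E (d : ℕ) : Type := EuclideanSpace ℝ (Fin d)

/-- The first `m` coordinates `x'` of a point `x = (x', xₙ) ∈ ℝ^{m+1}`. -/
def head {m : ℕ} (x : E (m + 1)) : E m := WithLp.toLp 2 (fun i : Fin m => x i.castSucc)

/-- The last coordinate `xₙ` of a point `x = (x', xₙ) ∈ ℝ^{m+1}`. -/
def lastc {m : ℕ} (x : E (m + 1)) : ℝ := x (Fin.last m)

/-- Assemble a point of `ℝ^{m+1}` from `x' ∈ ℝ^m` and `xₙ ∈ ℝ`. -/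
def snoc {m : ℕ} (x' : E m) (t : ℝ) : E (m + 1) :=
  WithLp.toLp 2 (fun i => (Fin.snoc (fun j => x' j) t : Fin (m + 1) → ℝ) i)

/-- The coordinate vector `eₙ`. -/
def en (m : ℕ) : E (m + 1) := EuclideanSpace.single (Fin.last m) 1

/-- `Ω⁺ = B₁ ∩ {xₙ > ψ(x')}`. -/
def Omegap {m : ℕ} (ψ : E m → ℝ) : Set (E (m + 1)) :=
  {x | x ∈ ball (0 : E (m + 1)) 1 ∧ ψ (head x) < lastc x}

/-- `Ω⁻ = B₁ ∩ {xₙ < ψ(x')}`. -/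
def Omegam {m : ℕ} (ψ : E m → ℝ) : Set (E (m + 1)) :=
  {x | x ∈ ball (0 : E (m + 1)) 1 ∧ lastc x < ψ (head x)}

/-- `Γ = B₁ ∩ {xₙ = ψ(x')}`. -/
def Gamma {m : ℕ} (ψ : E m → ℝ) : Set (E (m + 1)) :=
  {x | x ∈ ball (0 : E (m + 1)) 1 ∧ lastc x = ψ (head x)}

/-- The unit normal on `Γ` pointing into `Ω⁺`. -/
def normal {m : ℕ} (ψ : E m → ℝ) (x : E (m + 1)) : E (m + 1) :=
  (Real.sqrt (1 + ‖gradient ψ (head x)‖ ^ 2))⁻¹ • snoc (-(gradient ψ (head x))) 1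

/-- The Hessian matrix of `φ` at `x`. -/
def hess {d : ℕ} (φ : E d → ℝ) (x : E d) : Matrix (Fin d) (Fin d) ℝ :=
  fun i j => iteratedFDeriv ℝ 2 φ x ![EuclideanSpace.single i 1, EuclideanSpace.single j 1]

/-- Pucci minimal operator `M⁻_{λ,Λ}(M) = λ·Σ(pos eigenvalues) + Λ·Σ(neg eigenvalues)`. -/
def pucciInf {d : ℕ} (lam Lam : ℝ) (M : Matrix (Fin d) (Fin d) ℝ) : ℝ :=
  if h : M.IsHermitian then
    ∑ i, (if 0 ≤ h.eigenvalues i then lam else Lam) * h.eigenvalues i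
  else 0

/-- Pucci maximal operator `M⁺_{λ,Λ}(M) = Λ·Σ(pos eigenvalues) + λ·Σ(neg eigenvalues)`. -/
def pucciSup {d : ℕ} (lam Lam : ℝ) (M : Matrix (Fin d) (Fin d) ℝ) : ℝ :=
  if h : M.IsHermitian then
    ∑ i, (if 0 ≤ h.eigenvalues i then Lam else lam) * h.eigenvalues i
  else 0

/-- Operator norm of a matrix acting on Euclidean space. -/
def matNorm {d : ℕ} (M : Matrix (Fin d) (Fin d) ℝ) : ℝ :=
  ‖LinearMap.toContinuousLinearMap (Matrix.toEuclideanLin M)‖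

/-- The class `E(λ,Λ)` of uniformly elliptic operators with `F(0) = 0`. -/
def UniformlyElliptic {d : ℕ} (lam Lam : ℝ) (F : Matrix (Fin d) (Fin d) ℝ → ℝ) : Prop :=
  F 0 = 0 ∧
  ∀ M N : Matrix (Fin d) (Fin d) ℝ, M.IsHermitian → N.PosSemidef →
    lam * matNorm N ≤ F (M + N) - F M ∧ F (M + N) - F M ≤ Lam * matNorm N

/-- `φ` touches `u` from above at `x₀` (relative to `O`). -/
def TouchesAbove {d : ℕ} (u φ : E d → ℝ) (O : Set (E d)) (x₀ : E d) : Prop :=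
  φ x₀ = u x₀ ∧ ∀ᶠ x in nhds x₀, x ∈ O → u x ≤ φ x

/-- `φ` touches `u` from below at `x₀` (relative to `O`). -/
def TouchesBelow {d : ℕ} (u φ : E d → ℝ) (O : Set (E d)) (x₀ : E d) : Prop :=
  φ x₀ = u x₀ ∧ ∀ᶠ x in nhds x₀, x ∈ O → φ x ≤ u x

/-- Viscosity subsolution: `F(D²u) ≥ f` on `O`. -/
def ViscSubOn {d : ℕ} (F : Matrix (Fin d) (Fin d) ℝ → ℝ) (f u : E d → ℝ)
    (O : Set (E d)) : Prop :=
  ∀ x₀ ∈ O, ∀ φ : E d → ℝ, ContDiffAt ℝ 2 φ x₀ → TouchesAbove u φ O x₀ →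
    f x₀ ≤ F (hess φ x₀)

/-- Viscosity supersolution: `F(D²u) ≤ f` on `O`. -/
def ViscSupOn {d : ℕ} (F : Matrix (Fin d) (Fin d) ℝ → ℝ) (f u : E d → ℝ)
    (O : Set (E d)) : Prop :=
  ∀ x₀ ∈ O, ∀ φ : E d → ℝ, ContDiffAt ℝ 2 φ x₀ → TouchesBelow u φ O x₀ →
    F (hess φ x₀) ≤ f x₀

/-- `u ∈ S̄_{λ,Λ}(f)` on `O` (supersolution class). -/
def InSbar {d : ℕ} (lam Lam : ℝ) (f u : E d → ℝ) (O : Set (E d)) : Prop :=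
  LowerSemicontinuousOn u O ∧
  ∀ x₀ ∈ O, ∀ φ : E d → ℝ, ContDiffAt ℝ 2 φ x₀ → TouchesBelow u φ O x₀ →
    pucciInf lam Lam (hess φ x₀) ≤ f x₀

/-- `u ∈ S̲_{λ,Λ}(f)` on `O` (subsolution class). -/
def InSlower {d : ℕ} (lam Lam : ℝ) (f u : E d → ℝ) (O : Set (E d)) : Prop :=
  UpperSemicontinuousOn u O ∧
  ∀ x₀ ∈ O, ∀ φ : E d → ℝ, ContDiffAt ℝ 2 φ x₀ → TouchesAbove u φ O x₀ →
    f x₀ ≤ pucciSup lam Lam (hess φ x₀)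

/-- `u ∈ S*_{λ,Λ}(f)` on `O`. -/
def InSstar {d : ℕ} (lam Lam : ℝ) (f u : E d → ℝ) (O : Set (E d)) : Prop :=
  (∀ x₀ ∈ O, ∀ φ : E d → ℝ, ContDiffAt ℝ 2 φ x₀ → TouchesAbove u φ O x₀ →
    -|f x₀| ≤ pucciSup lam Lam (hess φ x₀)) ∧
  (∀ x₀ ∈ O, ∀ φ : E d → ℝ, ContDiffAt ℝ 2 φ x₀ → TouchesBelow u φ O x₀ →
    pucciInf lam Lam (hess φ x₀) ≤ |f x₀|)

/-- `u ∈ S_{λ,Λ}(0)` on `O`. -/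
def InS0 {d : ℕ} (lam Lam : ℝ) (u : E d → ℝ) (O : Set (E d)) : Prop :=
  (∀ x₀ ∈ O, ∀ φ : E d → ℝ, ContDiffAt ℝ 2 φ x₀ → TouchesAbove u φ O x₀ →
    0 ≤ pucciSup lam Lam (hess φ x₀)) ∧
  (∀ x₀ ∈ O, ∀ φ : E d → ℝ, ContDiffAt ℝ 2 φ x₀ → TouchesBelow u φ O x₀ →
    pucciInf lam Lam (hess φ x₀) ≤ 0)

/-- The viscosity transmission condition `u_ν⁺ − u_ν⁻ ≤ g` on `Γ` (supersolution side):
test functions touch `u` from below. -/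
def TransLE {m : ℕ} (ψ : E m → ℝ) (g u : E (m + 1) → ℝ) : Prop :=
  ∀ x₀ ∈ Gamma ψ, ∀ δ > (0 : ℝ), ∀ φ : E (m + 1) → ℝ, ∀ Lp Lm : E (m + 1) →L[ℝ] ℝ,
    ContinuousOn φ (ball x₀ δ) →
    ContDiffOn ℝ 1 φ (ball x₀ δ ∩ closure (Omegap ψ)) →
    ContDiffOn ℝ 1 φ (ball x₀ δ ∩ closure (Omegam ψ)) →
    HasFDerivWithinAt φ Lp (ball x₀ δ ∩ closure (Omegap ψ)) x₀ →
    HasFDerivWithinAt φ Lm (ball x₀ δ ∩ closure (Omegam ψ)) x₀ →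
    φ x₀ = u x₀ → (∀ x ∈ ball x₀ δ, φ x ≤ u x) →
    Lp (normal ψ x₀) - Lm (normal ψ x₀) ≤ g x₀

/-- The viscosity transmission condition `u_ν⁺ − u_ν⁻ ≥ g` on `Γ` (subsolution side):
test functions touch `u` from above. -/
def TransGE {m : ℕ} (ψ : E m → ℝ) (g u : E (m + 1) → ℝ) : Prop :=
  ∀ x₀ ∈ Gamma ψ, ∀ δ > (0 : ℝ), ∀ φ : E (m + 1) → ℝ, ∀ Lp Lm : E (m + 1) →L[ℝ] ℝ,
    ContinuousOn φ (ball x₀ δ) →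
    ContDiffOn ℝ 1 φ (ball x₀ δ ∩ closure (Omegap ψ)) →
    ContDiffOn ℝ 1 φ (ball x₀ δ ∩ closure (Omegam ψ)) →
    HasFDerivWithinAt φ Lp (ball x₀ δ ∩ closure (Omegap ψ)) x₀ →
    HasFDerivWithinAt φ Lm (ball x₀ δ ∩ closure (Omegam ψ)) x₀ →
    φ x₀ = u x₀ → (∀ x ∈ ball x₀ δ, u x ≤ φ x) →
    g x₀ ≤ Lp (normal ψ x₀) - Lm (normal ψ x₀)

/-- The viscosity transmission condition `u_ν⁺ − u_ν⁻ = g` on `Γ`. -/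
def TransEQ {m : ℕ} (ψ : E m → ℝ) (g u : E (m + 1) → ℝ) : Prop :=
  TransLE ψ g u ∧ TransGE ψ g u

/-- A viscosity solution of the curved-interface transmission problem
`F⁺(D²u) = f⁺` in `Ω⁺`, `F⁻(D²u) = f⁻` in `Ω⁻`, `u_ν⁺ − u_ν⁻ = g` on `Γ`. -/
def CurvedSol {m : ℕ} (ψ : E m → ℝ) (Fp Fm : Matrix (Fin (m + 1)) (Fin (m + 1)) ℝ → ℝ)
    (fp fm g u : E (m + 1) → ℝ) : Prop :=
  ContinuousOn u (ball (0 : E (m + 1)) 1) ∧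
  ViscSubOn Fp fp u (Omegap ψ) ∧ ViscSupOn Fp fp u (Omegap ψ) ∧
  ViscSubOn Fm fm u (Omegam ψ) ∧ ViscSupOn Fm fm u (Omegam ψ) ∧
  TransGE ψ g u ∧ TransLE ψ g u

/-! ### The flat interface setting -/

/-- `B_r⁺ = B_r ∩ {xₙ > 0}`. -/
def BpR (m : ℕ) (r : ℝ) : Set (E (m + 1)) :=
  {x | x ∈ ball (0 : E (m + 1)) r ∧ 0 < lastc x}

/-- `B_r⁻ = B_r ∩ {xₙ < 0}`. -/
def BmR (m : ℕ) (r : ℝ) : Set (E (m + 1)) :=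
  {x | x ∈ ball (0 : E (m + 1)) r ∧ lastc x < 0}

/-- `T_r = B_r ∩ {xₙ = 0}`. -/
def TR (m : ℕ) (r : ℝ) : Set (E (m + 1)) :=
  {x | x ∈ ball (0 : E (m + 1)) r ∧ lastc x = 0}

/-- The open upper half space `{xₙ > 0}`. -/
def Hp (m : ℕ) : Set (E (m + 1)) := {x | 0 < lastc x}

/-- The open lower half space `{xₙ < 0}`. -/
def Hm (m : ℕ) : Set (E (m + 1)) := {x | lastc x < 0}

/-- Flat interface subsolution condition `u_{xₙ}⁺ − u_{xₙ}⁻ ≥ g(x₀)` at `x₀ ∈ T` in the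
viscosity sense: test functions are `C²` up to the boundary on each closed half ball
and touch `u` from above. -/
def FlatTransSubAt {m : ℕ} (g u : E (m + 1) → ℝ) (x₀ : E (m + 1)) : Prop :=
  ∀ δ > (0 : ℝ), ∀ φ : E (m + 1) → ℝ, ∀ Lp Lm : E (m + 1) →L[ℝ] ℝ,
    ContinuousOn φ (ball x₀ δ) →
    ContDiffOn ℝ 2 φ (closure (ball x₀ δ ∩ Hp m)) →
    ContDiffOn ℝ 2 φ (closure (ball x₀ δ ∩ Hm m)) →
    HasFDerivWithinAt φ Lp (closure (ball x₀ δ ∩ Hp m)) x₀ →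
    HasFDerivWithinAt φ Lm (closure (ball x₀ δ ∩ Hm m)) x₀ →
    φ x₀ = u x₀ → (∀ x ∈ ball x₀ δ, u x ≤ φ x) →
    g x₀ ≤ Lp (en m) - Lm (en m)

/-- Flat interface supersolution condition `u_{xₙ}⁺ − u_{xₙ}⁻ ≤ g(x₀)` at `x₀ ∈ T`. -/
def FlatTransSupAt {m : ℕ} (g u : E (m + 1) → ℝ) (x₀ : E (m + 1)) : Prop :=
  ∀ δ > (0 : ℝ), ∀ φ : E (m + 1) → ℝ, ∀ Lp Lm : E (m + 1) →L[ℝ] ℝ,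
    ContinuousOn φ (ball x₀ δ) →
    ContDiffOn ℝ 2 φ (closure (ball x₀ δ ∩ Hp m)) →
    ContDiffOn ℝ 2 φ (closure (ball x₀ δ ∩ Hm m)) →
    HasFDerivWithinAt φ Lp (closure (ball x₀ δ ∩ Hp m)) x₀ →
    HasFDerivWithinAt φ Lm (closure (ball x₀ δ ∩ Hm m)) x₀ →
    φ x₀ = u x₀ → (∀ x ∈ ball x₀ δ, φ x ≤ u x) →
    Lp (en m) - Lm (en m) ≤ g x₀

/-- Viscosity subsolution of the flat transmission problem on `B_r`. -/
def FlatSub {m : ℕ} (r : ℝ) (Fp Fm : Matrix (Fin (m + 1)) (Fin (m + 1)) ℝ → ℝ)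
    (fp fm g u : E (m + 1) → ℝ) : Prop :=
  UpperSemicontinuousOn u (ball (0 : E (m + 1)) r) ∧
  ViscSubOn Fp fp u (BpR m r) ∧ ViscSubOn Fm fm u (BmR m r) ∧
  ∀ x₀ ∈ TR m r, FlatTransSubAt g u x₀

/-- Viscosity supersolution of the flat transmission problem on `B_r`. -/
def FlatSup {m : ℕ} (r : ℝ) (Fp Fm : Matrix (Fin (m + 1)) (Fin (m + 1)) ℝ → ℝ)
    (fp fm g u : E (m + 1) → ℝ) : Prop :=
  LowerSemicontinuousOn u (ball (0 : E (m + 1)) r) ∧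
  ViscSupOn Fp fp u (BpR m r) ∧ ViscSupOn Fm fm u (BmR m r) ∧
  ∀ x₀ ∈ TR m r, FlatTransSupAt g u x₀

/-- Viscosity solution of the flat transmission problem on `B_r`. -/
def FlatSol {m : ℕ} (r : ℝ) (Fp Fm : Matrix (Fin (m + 1)) (Fin (m + 1)) ℝ → ℝ)
    (fp fm g u : E (m + 1) → ℝ) : Prop :=
  ContinuousOn u (ball (0 : E (m + 1)) r) ∧
  FlatSub r Fp Fm fp fm g u ∧ FlatSup r Fp Fm fp fm g u

/-! ### Norms and miscellaneous quantities -/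

/-- Supremum of `f` over `s`. -/
def supOn {d : ℕ} (f : E d → ℝ) (s : Set (E d)) : ℝ := sSup (f '' s)

/-- Infimum of `f` over `s`. -/
def infOn {d : ℕ} (f : E d → ℝ) (s : Set (E d)) : ℝ := sInf (f '' s)

/-- Oscillation of `f` over `s`. -/
def oscOn {d : ℕ} (f : E d → ℝ) (s : Set (E d)) : ℝ := supOn f s - infOn f s

/-- `f` is bounded on `s`. -/
def BddOn {d : ℕ} (f : E d → ℝ) (s : Set (E d)) : Prop := ∃ M, ∀ x ∈ s, |f x| ≤ M

/-- The `L^p` norm of `f` on `s`. -/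
def lpNorm {d : ℕ} (p : ℝ) (f : E d → ℝ) (s : Set (E d)) : ℝ :=
  (∫ x in s, |f x| ^ p) ^ (1 / p)

/-- The average `L^p` norm `(⨍_s |f|^p)^{1/p}` of `f` on `s`. -/
def avgLp {d : ℕ} (p : ℝ) (f : E d → ℝ) (s : Set (E d)) : ℝ :=
  (⨍ x in s, |f x| ^ p) ^ (1 / p)

/-- `‖u‖_{C^{0,β}(s)} ≤ M` (up to a multiplicative constant): a sup bound together with a
`β`-Hölder seminorm bound on `s`. -/
def HolderBoundOn {d : ℕ} (β : ℝ) (u : E d → ℝ) (s : Set (E d)) (M : ℝ) : Prop :=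
  (∀ x ∈ s, |u x| ≤ M) ∧ ∀ x ∈ s, ∀ y ∈ s, |u x - u y| ≤ M * ‖x - y‖ ^ β

/-- `u ∈ C^{1,α}(s)` with `‖u‖_{C^{1,α}(s)} ≤ M` (up to a multiplicative constant),
derivatives understood up to the boundary. -/
def C1alphaBoundOn {d : ℕ} (α : ℝ) (u : E d → ℝ) (s : Set (E d)) (M : ℝ) : Prop :=
  ∃ du : E d → (E d →L[ℝ] ℝ),
    (∀ x ∈ s, HasFDerivWithinAt u (du x) s x) ∧
    (∀ x ∈ s, |u x| ≤ M) ∧ (∀ x ∈ s, ‖du x‖ ≤ M) ∧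
    (∀ x ∈ s, ∀ y ∈ s, ‖du x - du y‖ ≤ M * ‖x - y‖ ^ α)

/-- `u ∈ C^{2,α}(s)` with `‖u‖_{C^{2,α}(s)} ≤ M` (up to a multiplicative constant),
derivatives understood up to the boundary. -/
def C2alphaBoundOn {d : ℕ} (α : ℝ) (u : E d → ℝ) (s : Set (E d)) (M : ℝ) : Prop :=
  ∃ (du : E d → (E d →L[ℝ] ℝ)) (d2u : E d → (E d →L[ℝ] E d →L[ℝ] ℝ)),
    (∀ x ∈ s, HasFDerivWithinAt u (du x) s x) ∧
    (∀ x ∈ s, HasFDerivWithinAt du (d2u x) s x) ∧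
    (∀ x ∈ s, |u x| ≤ M) ∧ (∀ x ∈ s, ‖du x‖ ≤ M) ∧ (∀ x ∈ s, ‖d2u x‖ ≤ M) ∧
    (∀ x ∈ s, ∀ y ∈ s, ‖d2u x - d2u y‖ ≤ M * ‖x - y‖ ^ α)

/-- The quadratic form `v ↦ vᵀ A v` of a matrix. -/
def quadForm {d : ℕ} (A : Matrix (Fin d) (Fin d) ℝ) (v : E d) : ℝ :=
  ∑ i, ∑ j, A i j * v i * v j

/-- `φ` has one-sided first derivative `L` and one-sided Hessian `A` at `x₀` within `s`. -/
def HasHessianWithinAt {d : ℕ} (φ : E d → ℝ) (L : E d →L[ℝ] ℝ)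
    (A : Matrix (Fin d) (Fin d) ℝ) (s : Set (E d)) (x₀ : E d) : Prop :=
  (fun x => φ x - φ x₀ - L (x - x₀) - (1 / 2) * quadForm A (x - x₀))
    =o[nhdsWithin x₀ s] (fun x => ‖x - x₀‖ ^ 2)

/-- Upper `ε`-envelope of `u` in the `x'`-direction relative to `B_ρ`. -/
def upperEnv {m : ℕ} (ρ ε : ℝ) (u : E (m + 1) → ℝ) (y : E (m + 1)) : ℝ :=
  sSup ((fun x' : E m => u (snoc x' (lastc y)) - ε⁻¹ * ‖x' - head y‖ ^ 2) ''
    {x' : E m | snoc x' (lastc y) ∈ closedBall (0 : E (m + 1)) ρ})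

/-- Modulus of continuity of `h` on `s`. -/
def modulusOn {d : ℕ} (h : E d → ℝ) (s : Set (E d)) (t : ℝ) : ℝ :=
  sSup ((fun p : E d × E d => |h p.1 - h p.2|) ''
    {p : E d × E d | p.1 ∈ s ∧ p.2 ∈ s ∧ dist p.1 p.2 ≤ t})

end Transmission

namespace Transmission

/-! ### Auxiliary lemmas for Lemma 4.2 -/

private lemma continuous_lastc {m : ℕ} : Continuous (lastc (m := m)) :=
  (EuclideanSpace.proj (𝕜 := ℝ) (Fin.last m)).continuous

private lemma lastc_sub {m : ℕ} (x y : E (m + 1)) : lastc (x - y) = lastc x - lastc y := rfl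

private lemma lastc_add {m : ℕ} (x y : E (m + 1)) : lastc (x + y) = lastc x + lastc y := rfl

private lemma lastc_smul {m : ℕ} (t : ℝ) (x : E (m + 1)) : lastc (t • x) = t * lastc x := rfl

private lemma lastc_en {m : ℕ} : lastc (en m) = 1 := by
  simp [lastc, en]

private lemma abs_lastc_le {m : ℕ} (v : E (m + 1)) : |lastc v| ≤ ‖v‖ := by
  have h := abs_real_inner_le_norm (EuclideanSpace.single (Fin.last m) (1 : ℝ)) v
  rw [EuclideanSpace.inner_single_left] at h
  simpa [lastc] using h

private lemma sum_sq_eq_norm_sq {d : ℕ} (v : E d) : ∑ i, v i ^ 2 = ‖v‖ ^ 2 := by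
  have h : ‖v‖ ^ 2 = ∑ i, ‖v i‖ ^ 2 := by
    rw [EuclideanSpace.norm_eq]
    exact Real.sq_sqrt (Finset.sum_nonneg fun i _ => by positivity)
  rw [h]
  simp [Real.norm_eq_abs, sq_abs]

private lemma mem_closure_Hp {m : ℕ} {x₀ x : E (m + 1)} {δ : ℝ}
    (hx : x ∈ ball x₀ δ) (h0 : lastc x = 0) : x ∈ closure (ball x₀ δ ∩ Hp m) := by
  have hδx : 0 < δ - dist x x₀ := by rw [mem_ball] at hx; linarith
  rw [Metric.mem_closure_iff]
  intro ε hε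
  set t : ℝ := min (ε / 2) ((δ - dist x x₀) / 2) with ht
  have htpos : 0 < t := lt_min (by linarith) (by linarith)
  have hdxy : dist (x + t • en m) x = t := by
    rw [dist_eq_norm, add_sub_cancel_left, norm_smul, en, EuclideanSpace.norm_single]
    simp [abs_of_pos htpos]
  refine ⟨x + t • en m, ⟨?_, ?_⟩, ?_⟩
  · rw [mem_ball]
    calc dist (x + t • en m) x₀ ≤ dist (x + t • en m) x + dist x x₀ := dist_triangle _ _ _
      _ < δ := by
          rw [hdxy]
          have h2 : t ≤ (δ - dist x x₀) / 2 := min_le_right _ _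
          linarith
  · show 0 < lastc (x + t • en m)
    rw [lastc_add, lastc_smul, lastc_en, h0]
    simpa using htpos
  · rw [dist_comm, hdxy]
    have := min_le_left (ε / 2) ((δ - dist x x₀) / 2)
    linarith

private lemma mem_closure_Hm {m : ℕ} {x₀ x : E (m + 1)} {δ : ℝ}
    (hx : x ∈ ball x₀ δ) (h0 : lastc x = 0) : x ∈ closure (ball x₀ δ ∩ Hm m) := by
  have hδx : 0 < δ - dist x x₀ := by rw [mem_ball] at hx; linarith
  rw [Metric.mem_closure_iff]
  intro ε hε
  set t : ℝ := min (ε / 2) ((δ - dist x x₀) / 2) with ht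
  have htpos : 0 < t := lt_min (by linarith) (by linarith)
  have hdxy : dist (x - t • en m) x = t := by
    rw [dist_eq_norm]
    have h3 : x - t • en m - x = -(t • en m) := by abel
    rw [h3, norm_neg, norm_smul, en, EuclideanSpace.norm_single]
    simp [abs_of_pos htpos]
  refine ⟨x - t • en m, ⟨?_, ?_⟩, ?_⟩
  · rw [mem_ball]
    calc dist (x - t • en m) x₀ ≤ dist (x - t • en m) x + dist x x₀ := dist_triangle _ _ _
      _ < δ := by
          rw [hdxy]
          have h2 : t ≤ (δ - dist x x₀) / 2 := min_le_right _ _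
          linarith
  · show lastc (x - t • en m) < 0
    rw [lastc_sub, lastc_smul, lastc_en, h0]
    simpa using htpos
  · rw [dist_comm, hdxy]
    have := min_le_left (ε / 2) ((δ - dist x x₀) / 2)
    linarith

private lemma closure_Hp_subset {m : ℕ} (x₀ : E (m + 1)) (δ : ℝ) :
    closure (ball x₀ δ ∩ Hp m) ⊆ closedBall x₀ δ ∩ {x | 0 ≤ lastc x} := by
  refine closure_minimal (fun x hx => ⟨ball_subset_closedBall hx.1, ?_⟩) ?_
  · exact le_of_lt (show (0 : ℝ) < lastc x from hx.2)
  · exact Metric.isClosed_closedBall.inter (isClosed_le continuous_const continuous_lastc)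

private lemma closure_Hm_subset {m : ℕ} (x₀ : E (m + 1)) (δ : ℝ) :
    closure (ball x₀ δ ∩ Hm m) ⊆ closedBall x₀ δ ∩ {x | lastc x ≤ 0} := by
  refine closure_minimal (fun x hx => ⟨ball_subset_closedBall hx.1, ?_⟩) ?_
  · exact le_of_lt (show lastc x < (0 : ℝ) from hx.2)
  · exact Metric.isClosed_closedBall.inter (isClosed_le continuous_lastc continuous_const)

private lemma convex_side_Hp {m : ℕ} (x₀ : E (m + 1)) (δ : ℝ) :
    Convex ℝ (ball x₀ δ ∩ Hp m) :=
  (convex_ball x₀ δ).inter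
    (convex_halfSpace_gt ((EuclideanSpace.projₗ (𝕜 := ℝ) (Fin.last m)).isLinear) 0)

private lemma convex_side_Hm {m : ℕ} (x₀ : E (m + 1)) (δ : ℝ) :
    Convex ℝ (ball x₀ δ ∩ Hm m) :=
  (convex_ball x₀ δ).inter
    (convex_halfSpace_lt ((EuclideanSpace.projₗ (𝕜 := ℝ) (Fin.last m)).isLinear) 0)

private lemma uniqueDiffOn_closure_Hp {m : ℕ} {x₀ : E (m + 1)} {δ : ℝ} (hδ : 0 < δ)
    (h0 : lastc x₀ = 0) : UniqueDiffOn ℝ (closure (ball x₀ δ ∩ Hp m)) := by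
  apply uniqueDiffOn_convex ((convex_side_Hp x₀ δ).closure)
  have hopen : IsOpen (ball x₀ δ ∩ Hp m) :=
    isOpen_ball.inter (isOpen_lt continuous_const continuous_lastc)
  have hmem : x₀ + (δ / 2) • en m ∈ ball x₀ δ ∩ Hp m := by
    constructor
    · rw [mem_ball, dist_eq_norm, add_sub_cancel_left, norm_smul, en,
        EuclideanSpace.norm_single, Real.norm_eq_abs, norm_one, mul_one,
        abs_of_pos (half_pos hδ)]
      linarith
    · show 0 < lastc (x₀ + (δ / 2) • en m)
      rw [lastc_add, lastc_smul, lastc_en, h0]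
      simpa using half_pos hδ
  exact ⟨_, (hopen.subset_interior_iff.mpr subset_closure) hmem⟩

private lemma uniqueDiffOn_closure_Hm {m : ℕ} {x₀ : E (m + 1)} {δ : ℝ} (hδ : 0 < δ)
    (h0 : lastc x₀ = 0) : UniqueDiffOn ℝ (closure (ball x₀ δ ∩ Hm m)) := by
  apply uniqueDiffOn_convex ((convex_side_Hm x₀ δ).closure)
  have hopen : IsOpen (ball x₀ δ ∩ Hm m) :=
    isOpen_ball.inter (isOpen_lt continuous_lastc continuous_const)
  have hmem : x₀ - (δ / 2) • en m ∈ ball x₀ δ ∩ Hm m := by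
    constructor
    · rw [mem_ball, dist_eq_norm]
      have h3 : x₀ - (δ / 2) • en m - x₀ = -((δ / 2) • en m) := by abel
      rw [h3, norm_neg, norm_smul, en, EuclideanSpace.norm_single, Real.norm_eq_abs,
        norm_one, mul_one, abs_of_pos (half_pos hδ)]
      linarith
    · show lastc (x₀ - (δ / 2) • en m) < 0
      rw [lastc_sub, lastc_smul, lastc_en, h0]
      simpa using half_pos hδ
  exact ⟨_, (hopen.subset_interior_iff.mpr subset_closure) hmem⟩

private lemma tangential_eq {m : ℕ} {x₀ : E (m + 1)} {δ : ℝ} (hδ : 0 < δ)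
    (h0 : lastc x₀ = 0) {φ : E (m + 1) → ℝ} {Lp Lm : E (m + 1) →L[ℝ] ℝ}
    (hLp : HasFDerivWithinAt φ Lp (closure (ball x₀ δ ∩ Hp m)) x₀)
    (hLm : HasFDerivWithinAt φ Lm (closure (ball x₀ δ ∩ Hm m)) x₀)
    {v : E (m + 1)} (hv : lastc v = 0) : Lp v = Lm v := by
  set r : ℝ := δ / (‖v‖ + 1) with hr
  have hrpos : 0 < r := div_pos hδ (by positivity)
  have hc : ∀ t : ℝ, t ∈ ball (0 : ℝ) r → (x₀ + t • v) ∈ ball x₀ δ ∧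
      lastc (x₀ + t • v) = 0 := by
    intro t htr
    rw [mem_ball, dist_zero_right, Real.norm_eq_abs] at htr
    constructor
    · rw [mem_ball, dist_eq_norm, add_sub_cancel_left, norm_smul, Real.norm_eq_abs]
      calc |t| * ‖v‖ ≤ |t| * (‖v‖ + 1) := by nlinarith [abs_nonneg t]
        _ < r * (‖v‖ + 1) := by nlinarith [norm_nonneg v]
        _ = δ := by rw [hr]; field_simp
    · rw [lastc_add, lastc_smul, h0, hv]; ring
  have hder : HasDerivAt (fun t : ℝ => x₀ + t • v) v 0 := by
    simpa using ((hasDerivAt_id (0 : ℝ)).smul_const v).const_add x₀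
  have key : ∀ (L : E (m + 1) →L[ℝ] ℝ) (s : Set (E (m + 1))),
      HasFDerivWithinAt φ L s x₀ →
      (∀ y : E (m + 1), y ∈ ball x₀ δ → lastc y = 0 → y ∈ s) →
      HasDerivAt (fun t : ℝ => φ (x₀ + t • v)) (L v) 0 := by
    intro L s hL hsub
    have hmaps : MapsTo (fun t : ℝ => x₀ + t • v) (ball (0 : ℝ) r) s := by
      intro t ht
      obtain ⟨h1, h2⟩ := hc t ht
      exact hsub _ h1 h2
    have h0' : HasFDerivWithinAt φ L s (x₀ + (0 : ℝ) • v) := by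
      rw [zero_smul, add_zero]; exact hL
    have hcomp := h0'.comp_hasDerivWithinAt (0 : ℝ) hder.hasDerivWithinAt hmaps
    exact hcomp.hasDerivAt (Metric.ball_mem_nhds 0 hrpos)
  exact (key Lp _ hLp fun y h1 h2 => mem_closure_Hp h1 h2).unique
    (key Lm _ hLm fun y h1 h2 => mem_closure_Hm h1 h2)

private lemma quad_upper_bound {d : ℕ} {s : Set (E d)} (hconv : Convex ℝ s)
    (hud : UniqueDiffOn ℝ s) {φ : E d → ℝ} {x₀ : E d} (hx₀ : x₀ ∈ s)
    (hφ : ContDiffOn ℝ 2 φ s) {L : E d →L[ℝ] ℝ} (hL : HasFDerivWithinAt φ L s x₀) :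
    ∃ C r : ℝ, 0 < r ∧ ∀ x ∈ s, ‖x - x₀‖ ≤ r →
      |φ x - φ x₀ - L (x - x₀)| ≤ C * ‖x - x₀‖ ^ 2 := by
  set f' := fderivWithin ℝ φ s with hf'
  have hdiff : DifferentiableOn ℝ φ s := hφ.differentiableOn (by norm_num)
  have hder : ∀ x ∈ s, HasFDerivWithinAt φ (f' x) s x := fun x hx =>
    (hdiff x hx).hasFDerivWithinAt
  have hLeq : f' x₀ = L := hL.fderivWithin (hud x₀ hx₀)
  have hf'c : ContDiffOn ℝ 1 f' s := hφ.fderivWithin hud (by norm_num)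
  set f'' := fderivWithin ℝ f' s with hf''
  have hder2 : ∀ x ∈ s, HasFDerivWithinAt f' (f'' x) s x := fun x hx =>
    ((hf'c.differentiableOn (by norm_num)) x hx).hasFDerivWithinAt
  have hcont : ContinuousOn f'' s := hf'c.continuousOn_fderivWithin hud (by norm_num)
  obtain ⟨r, hr, hball⟩ : ∃ r > (0 : ℝ), ∀ x ∈ s ∩ closedBall x₀ r,
      ‖f'' x‖ ≤ ‖f'' x₀‖ + 1 := by
    have hev : ∀ᶠ x in nhdsWithin x₀ s, ‖f'' x‖ < ‖f'' x₀‖ + 1 :=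
      ((ContinuousOn.norm (f := f'') hcont) x₀ hx₀).eventually_lt_const (by linarith)
    obtain ⟨ε, hε, hsub⟩ := Metric.mem_nhdsWithin_iff.mp hev
    refine ⟨ε / 2, by linarith, fun x hx => ?_⟩
    have hd : dist x x₀ < ε := lt_of_le_of_lt (mem_closedBall.mp hx.2) (by linarith)
    exact le_of_lt (hsub ⟨mem_ball.mpr hd, hx.1⟩)
  set C := ‖f'' x₀‖ + 1 with hC
  have hCpos : 0 ≤ C := by positivity
  refine ⟨C, r, hr, fun x hx hxr => ?_⟩
  set t := s ∩ closedBall x₀ r with htdef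
  have htconv : Convex ℝ t := hconv.inter (convex_closedBall _ _)
  have hx₀t : x₀ ∈ t := ⟨hx₀, mem_closedBall_self hr.le⟩
  have hxt : x ∈ t := ⟨hx, by rwa [mem_closedBall, dist_eq_norm]⟩
  have hA : ∀ z ∈ t, ‖f' z - L‖ ≤ C * ‖z - x₀‖ := by
    intro z hz
    have := htconv.norm_image_sub_le_of_norm_hasFDerivWithin_le
      (fun y hy => (hder2 y hy.1).mono inter_subset_left)
      (fun y hy => hball y hy) hx₀t hz
    rwa [hLeq] at this
  set t2 := s ∩ closedBall x₀ ‖x - x₀‖ with ht2def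
  have ht2t : t2 ⊆ t := inter_subset_inter_right _ (closedBall_subset_closedBall hxr)
  have ht2conv : Convex ℝ t2 := hconv.inter (convex_closedBall _ _)
  have hx₀t2 : x₀ ∈ t2 := ⟨hx₀, mem_closedBall_self (norm_nonneg _)⟩
  have hxt2 : x ∈ t2 := ⟨hx, by rw [mem_closedBall, dist_eq_norm]⟩
  have hB := ht2conv.norm_image_sub_le_of_norm_hasFDerivWithin_le'
    (fun z hz => (hder z hz.1).mono inter_subset_left)
    (fun z hz => le_trans (hA z (ht2t hz))
      (mul_le_mul_of_nonneg_left
        (by rw [← dist_eq_norm]; exact mem_closedBall.mp hz.2) hCpos))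
    hx₀t2 hxt2
  rw [Real.norm_eq_abs] at hB
  calc |φ x - φ x₀ - L (x - x₀)| ≤ C * ‖x - x₀‖ * ‖x - x₀‖ := hB
    _ = C * ‖x - x₀‖ ^ 2 := by ring

private lemma hasFDerivAt_quad {m : ℕ} {x₀ : E (m + 1)} (h0 : lastc x₀ = 0) (a b : ℝ) :
    HasFDerivAt (fun x : E (m + 1) => a * ‖x - x₀‖ ^ 2 + b * lastc x ^ 2)
      (0 : E (m + 1) →L[ℝ] ℝ) x₀ := by
  rw [hasFDerivAt_iff_isLittleO_nhds_zero, isLittleO_iff]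
  intro c hc
  have hpos : (0 : ℝ) < c / (|a| + |b| + 1) := by positivity
  filter_upwards [Metric.closedBall_mem_nhds (0 : E (m + 1)) hpos] with h hball
  rw [mem_closedBall, dist_zero_right] at hball
  have hsimp : a * ‖x₀ + h - x₀‖ ^ 2 + b * lastc (x₀ + h) ^ 2 -
      (a * ‖x₀ - x₀‖ ^ 2 + b * lastc x₀ ^ 2) - (0 : E (m + 1) →L[ℝ] ℝ) h
      = a * ‖h‖ ^ 2 + b * lastc h ^ 2 := by
    rw [lastc_add, h0, zero_add, add_sub_cancel_left, sub_self, norm_zero]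
    simp
  rw [hsimp]
  have hl : lastc h ^ 2 ≤ ‖h‖ ^ 2 := by
    have h1 := mul_self_le_mul_self (abs_nonneg (lastc h)) (abs_lastc_le h)
    rw [abs_mul_abs_self] at h1
    nlinarith [h1]
  have hS : (0 : ℝ) ≤ |a| + |b| := by positivity
  have hbnd : ‖a * ‖h‖ ^ 2 + b * lastc h ^ 2‖ ≤ (|a| + |b|) * ‖h‖ ^ 2 := by
    rw [Real.norm_eq_abs]
    calc |a * ‖h‖ ^ 2 + b * lastc h ^ 2|
        ≤ |a * ‖h‖ ^ 2| + |b * lastc h ^ 2| := abs_add_le _ _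
      _ = |a| * ‖h‖ ^ 2 + |b| * lastc h ^ 2 := by
          rw [abs_mul, abs_mul, abs_of_nonneg (by positivity : (0 : ℝ) ≤ ‖h‖ ^ 2),
            abs_of_nonneg (sq_nonneg (lastc h))]
      _ ≤ (|a| + |b|) * ‖h‖ ^ 2 := by nlinarith [abs_nonneg b, sq_nonneg ‖h‖]
  have h5 : (|a| + |b|) * ‖h‖ ≤ c := by
    have h6 : (|a| + |b|) * ‖h‖ ≤ (|a| + |b|) * (c / (|a| + |b| + 1)) :=
      mul_le_mul_of_nonneg_left hball hS
    have h7 : (|a| + |b|) * (c / (|a| + |b| + 1)) ≤ c := by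
      have h8 : (|a| + |b|) / (|a| + |b| + 1) ≤ 1 := by
        rw [div_le_one (by positivity)]
        linarith
      have h9 := mul_le_mul_of_nonneg_left h8 hc.le
      rw [mul_one] at h9
      calc (|a| + |b|) * (c / (|a| + |b| + 1))
          = c * ((|a| + |b|) / (|a| + |b| + 1)) := by ring
        _ ≤ c := h9
    linarith
  calc ‖a * ‖h‖ ^ 2 + b * lastc h ^ 2‖ ≤ (|a| + |b|) * ‖h‖ ^ 2 := hbnd
    _ = ((|a| + |b|) * ‖h‖) * ‖h‖ := by ring
    _ ≤ c * ‖h‖ := mul_le_mul_of_nonneg_right h5 (norm_nonneg _)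

private def lastMat (m : ℕ) (c : ℝ) : Matrix (Fin (m + 1)) (Fin (m + 1)) ℝ :=
  Matrix.of fun i j => if i = Fin.last m ∧ j = Fin.last m then c else 0

private lemma lastMat_mulVec {m : ℕ} (c : ℝ) (x : Fin (m + 1) → ℝ) :
    Matrix.mulVec (lastMat m c) x
      = fun i => if i = Fin.last m then c * x (Fin.last m) else 0 := by
  funext i
  simp only [lastMat, Matrix.mulVec, dotProduct, Matrix.of_apply]
  by_cases h : i = Fin.last m
  · subst h
    simp only [true_and, ite_mul, zero_mul, if_pos rfl]
    rw [Finset.sum_ite_eq' Finset.univ (Fin.last m) (fun j => c * x j)]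
    simp
  · simp [h]

private lemma lastMat_isHermitian {m : ℕ} (c : ℝ) : (lastMat m c).IsHermitian := by
  ext i j
  simp only [lastMat, Matrix.conjTranspose_apply, Matrix.of_apply, star_trivial]
  by_cases h1 : i = Fin.last m <;> by_cases h2 : j = Fin.last m <;> simp [h1, h2]

private lemma lastMat_posSemidef {m : ℕ} {c : ℝ} (hc : 0 ≤ c) : (lastMat m c).PosSemidef := by
  refine Matrix.PosSemidef.of_dotProduct_mulVec_nonneg (lastMat_isHermitian c) fun x => ?_
  rw [lastMat_mulVec]
  have hdot : dotProduct (star x)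
        (fun i => if i = Fin.last m then c * x (Fin.last m) else 0)
      = x (Fin.last m) * (c * x (Fin.last m)) := by
    simp only [dotProduct, Pi.star_apply, star_trivial, mul_ite, mul_zero]
    rw [Finset.sum_ite_eq' Finset.univ (Fin.last m) (fun j => x j * (c * x (Fin.last m)))]
    simp
  rw [hdot]
  nlinarith [sq_nonneg (x (Fin.last m)), hc]

private lemma smul_one_isHermitian {d : ℕ} (b : ℝ) :
    (b • (1 : Matrix (Fin d) (Fin d) ℝ)).IsHermitian := by
  ext i j
  simp only [Matrix.conjTranspose_apply, Matrix.smul_apply, Matrix.one_apply, star_trivial,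
    smul_eq_mul]
  by_cases h : i = j <;> simp [h, eq_comm]

private lemma lastMat_matNorm_ge {m : ℕ} {c : ℝ} (hc : 0 ≤ c) : c ≤ matNorm (lastMat m c) := by
  have happ : (Matrix.toEuclideanLin (lastMat m c)) (EuclideanSpace.single (Fin.last m) (1 : ℝ))
      = EuclideanSpace.single (Fin.last m) c := by
    rw [Matrix.toEuclideanLin_apply, EuclideanSpace.ofLp_single, lastMat_mulVec,
      ← EuclideanSpace.toLp_single]
    congr 1
    funext i
    by_cases h : i = Fin.last m <;> simp [h, Pi.single_apply]
  have h1 := (LinearMap.toContinuousLinearMap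
    (Matrix.toEuclideanLin (lastMat m c))).le_opNorm (EuclideanSpace.single (Fin.last m) (1 : ℝ))
  rw [show (LinearMap.toContinuousLinearMap (Matrix.toEuclideanLin (lastMat m c)))
      (EuclideanSpace.single (Fin.last m) (1 : ℝ))
      = (Matrix.toEuclideanLin (lastMat m c)) (EuclideanSpace.single (Fin.last m) (1 : ℝ))
    from rfl, happ, EuclideanSpace.norm_single, EuclideanSpace.norm_single] at h1
  simpa [matNorm, Real.norm_eq_abs, abs_of_nonneg hc] using h1

private lemma quadForm_smul_one {d : ℕ} (b : ℝ) (v : E d) :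
    quadForm (b • (1 : Matrix (Fin d) (Fin d) ℝ)) v = b * ‖v‖ ^ 2 := by
  unfold quadForm
  rw [← sum_sq_eq_norm_sq, Finset.mul_sum]
  refine Finset.sum_congr rfl fun i _ => ?_
  have h1 : ∀ j : Fin d, (b • (1 : Matrix (Fin d) (Fin d) ℝ)) i j * v i * v j
      = if i = j then b * (v i * v j) else 0 := by
    intro j
    simp only [Matrix.smul_apply, Matrix.one_apply, smul_eq_mul]
    by_cases h : i = j <;> simp [h] <;> ring
  simp_rw [h1]
  rw [Finset.sum_ite_eq Finset.univ i (fun j => b * (v i * v j))]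
  simp [sq]

private lemma quadForm_lastMat {m : ℕ} (c : ℝ) (v : E (m + 1)) :
    quadForm (lastMat m c) v = c * lastc v ^ 2 := by
  unfold quadForm
  rw [Finset.sum_eq_single_of_mem (Fin.last m) (Finset.mem_univ _)
    (fun i _ hi => Finset.sum_eq_zero fun j _ => by simp [lastMat, hi]),
    Finset.sum_eq_single_of_mem (Fin.last m) (Finset.mem_univ _)
    (fun j _ hj => by simp [lastMat, hj])]
  have h2 : lastMat m c (Fin.last m) (Fin.last m) = c := by simp [lastMat]
  rw [h2]
  show c * v (Fin.last m) * v (Fin.last m) = c * v (Fin.last m) ^ 2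
  ring

set_option maxHeartbeats 2000000 in
private lemma trans_from_disj {m : ℕ} {lam Lam : ℝ} (hlam : 0 < lam)
    {Fp Fm : Matrix (Fin (m + 1)) (Fin (m + 1)) ℝ → ℝ}
    (hFp : UniformlyElliptic lam Lam Fp) (hFm : UniformlyElliptic lam Lam Fm)
    {fp fm g u : E (m + 1) → ℝ} {x₀ : E (m + 1)} (h0 : lastc x₀ = 0)
    (H : ∀ δ > (0 : ℝ), ∀ φ : E (m + 1) → ℝ,
          ∀ Lp Lm : E (m + 1) →L[ℝ] ℝ, ∀ Ap Am : Matrix (Fin (m + 1)) (Fin (m + 1)) ℝ,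
          ContinuousOn φ (ball x₀ δ) →
          ContDiffOn ℝ 2 φ (closure (ball x₀ δ ∩ Hp m)) →
          ContDiffOn ℝ 2 φ (closure (ball x₀ δ ∩ Hm m)) →
          HasFDerivWithinAt φ Lp (closure (ball x₀ δ ∩ Hp m)) x₀ →
          HasFDerivWithinAt φ Lm (closure (ball x₀ δ ∩ Hm m)) x₀ →
          HasHessianWithinAt φ Lp Ap (closure (ball x₀ δ ∩ Hp m)) x₀ →
          HasHessianWithinAt φ Lm Am (closure (ball x₀ δ ∩ Hm m)) x₀ →
          φ x₀ = u x₀ → (∀ x ∈ ball x₀ δ, u x ≤ φ x) →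
          (fp x₀ ≤ Fp Ap ∨ fm x₀ ≤ Fm Am ∨ g x₀ ≤ Lp (en m) - Lm (en m))) :
    FlatTransSubAt g u x₀ := by
  intro δ hδ φ Lp Lm hcφ h2p h2m hLp hLm heq habove
  have hx₀p : x₀ ∈ closure (ball x₀ δ ∩ Hp m) := mem_closure_Hp (mem_ball_self hδ) h0
  have hx₀m : x₀ ∈ closure (ball x₀ δ ∩ Hm m) := mem_closure_Hm (mem_ball_self hδ) h0
  have hjump : ∀ v : E (m + 1), Lp v - Lm v = (Lp (en m) - Lm (en m)) * lastc v := by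
    intro v
    have hw : lastc (v - lastc v • en m) = 0 := by
      rw [lastc_sub, lastc_smul, lastc_en]; ring
    have ht := tangential_eq hδ h0 hLp hLm hw
    rw [map_sub, map_sub] at ht
    simp only [ContinuousLinearMap.map_smul, smul_eq_mul] at ht
    linear_combination ht
  obtain ⟨Cp, rp, hrp, hTp⟩ := quad_upper_bound ((convex_side_Hp x₀ δ).closure)
    (uniqueDiffOn_closure_Hp hδ h0) hx₀p h2p hLp
  obtain ⟨Cm, rm, hrm, hTm⟩ := quad_upper_bound ((convex_side_Hm x₀ δ).closure)
    (uniqueDiffOn_closure_Hm hδ h0) hx₀m h2m hLm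
  set C' : ℝ := max Cp Cm with hC'
  set a : ℝ := Lp (en m) - Lm (en m) with ha
  set ℓ : E (m + 1) →L[ℝ] ℝ := EuclideanSpace.proj (Fin.last m) with hℓ
  have hℓapp : ∀ x : E (m + 1), ℓ x = lastc x := fun x => rfl
  have main : ∀ ε > (0 : ℝ), g x₀ ≤ a + 2 * ε := by
    intro ε hε
    set B : Matrix (Fin (m + 1)) (Fin (m + 1)) ℝ :=
      (2 * C') • (1 : Matrix (Fin (m + 1)) (Fin (m + 1)) ℝ) with hB
    set K : ℝ := max 1 ((max (Fp B - fp x₀) (Fm B - fm x₀) + 1) / (2 * lam * ε)) with hK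
    have hK1 : (1 : ℝ) ≤ K := le_max_left _ _
    have hKpos : (0 : ℝ) < K := lt_of_lt_of_le one_pos hK1
    have hKbig : max (Fp B - fp x₀) (Fm B - fm x₀) + 1 ≤ 2 * lam * ε * K := by
      have h2 : (max (Fp B - fp x₀) (Fm B - fm x₀) + 1) / (2 * lam * ε) ≤ K := le_max_right _ _
      have hpos : (0 : ℝ) < 2 * lam * ε := by positivity
      calc max (Fp B - fp x₀) (Fm B - fm x₀) + 1
          = ((max (Fp B - fp x₀) (Fm B - fm x₀) + 1) / (2 * lam * ε)) * (2 * lam * ε) := by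
            field_simp
        _ ≤ K * (2 * lam * ε) := mul_le_mul_of_nonneg_right h2 hpos.le
        _ = 2 * lam * ε * K := by ring
    set N : Matrix (Fin (m + 1)) (Fin (m + 1)) ℝ := lastMat m (2 * ε * K) with hN
    set Ap : Matrix (Fin (m + 1)) (Fin (m + 1)) ℝ := B - N with hAp
    have hApN : Ap + N = B := by rw [hAp]; abel
    have hNpsd : N.PosSemidef := lastMat_posSemidef (by positivity)
    have hApH : Ap.IsHermitian := (smul_one_isHermitian (2 * C')).sub (lastMat_isHermitian _)
    have hNnorm : 2 * ε * K ≤ matNorm N := lastMat_matNorm_ge (by positivity)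
    have hFpAp : Fp Ap < fp x₀ := by
      have hell := (hFp.2 Ap N hApH hNpsd).1
      rw [hApN] at hell
      have h5 : lam * (2 * ε * K) ≤ lam * matNorm N := mul_le_mul_of_nonneg_left hNnorm hlam.le
      have h6 : Fp B - fp x₀ ≤ max (Fp B - fp x₀) (Fm B - fm x₀) := le_max_left _ _
      nlinarith [hell, h5, h6, hKbig]
    have hFmAp : Fm Ap < fm x₀ := by
      have hell := (hFm.2 Ap N hApH hNpsd).1
      rw [hApN] at hell
      have h5 : lam * (2 * ε * K) ≤ lam * matNorm N := mul_le_mul_of_nonneg_left hNnorm hlam.le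
      have h6 : Fm B - fm x₀ ≤ max (Fp B - fp x₀) (Fm B - fm x₀) := le_max_right _ _
      nlinarith [hell, h5, h6, hKbig]
    set Lp' : E (m + 1) →L[ℝ] ℝ := Lp + ε • ℓ with hLp'
    set Lm' : E (m + 1) →L[ℝ] ℝ := Lm - ε • ℓ with hLm'
    set Q : E (m + 1) → ℝ := fun x =>
      u x₀ + Lm (x - x₀) + a * max (lastc x) 0 + C' * ‖x - x₀‖ ^ 2
        + ε * |lastc x| - ε * K * lastc x ^ 2 with hQ
    have hQx₀ : Q x₀ = u x₀ := by simp [hQ, h0]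
    have hQp : ∀ x : E (m + 1), 0 ≤ lastc x →
        Q x = u x₀ + Lp (x - x₀) +
          (C' * ‖x - x₀‖ ^ 2 + (ε * lastc x - ε * K * lastc x ^ 2)) := by
      intro x hx
      have h1 : Lp (x - x₀) = Lm (x - x₀) + a * lastc x := by
        have h2 := hjump (x - x₀)
        rw [lastc_sub, h0, sub_zero] at h2
        linarith
      simp only [hQ]
      rw [max_eq_left hx, abs_of_nonneg hx, h1]
      ring
    have hQm : ∀ x : E (m + 1), lastc x ≤ 0 →
        Q x = u x₀ + Lm (x - x₀) +
          (C' * ‖x - x₀‖ ^ 2 + ((-ε) * lastc x - ε * K * lastc x ^ 2)) := by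
      intro x hx
      simp only [hQ]
      rw [max_eq_right hx, abs_of_nonpos hx]
      ring
    have hsmooth : ∀ (L : E (m + 1) →L[ℝ] ℝ) (b : ℝ),
        ContDiff ℝ 2 (fun x : E (m + 1) => u x₀ + L (x - x₀) +
          (C' * ‖x - x₀‖ ^ 2 + (b * lastc x - ε * K * lastc x ^ 2))) := by
      intro L b
      have hlc : ContDiff ℝ 2 (fun x : E (m + 1) => lastc x) := ℓ.contDiff
      have hnrm : ContDiff ℝ 2 (fun x : E (m + 1) => ‖x - x₀‖ ^ 2) :=
        (contDiff_norm_sq ℝ).comp (contDiff_id.sub contDiff_const)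
      exact (contDiff_const.add (L.contDiff.comp (contDiff_id.sub contDiff_const))).add
        ((contDiff_const.mul hnrm).add
          ((contDiff_const.mul hlc).sub (contDiff_const.mul (hlc.pow 2))))
    have hsder : ∀ (L : E (m + 1) →L[ℝ] ℝ) (b : ℝ),
        HasFDerivAt (fun x : E (m + 1) => u x₀ + L (x - x₀) +
          (C' * ‖x - x₀‖ ^ 2 + (b * lastc x - ε * K * lastc x ^ 2))) (L + b • ℓ) x₀ := by
      intro L b
      have hL1 : HasFDerivAt (fun x : E (m + 1) => L (x - x₀)) L x₀ := by
        have he : (fun x : E (m + 1) => L (x - x₀)) = fun x => L x - L x₀ := by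
          funext x; rw [map_sub]
        rw [he]
        exact L.hasFDerivAt.sub_const (L x₀)
      have hb : HasFDerivAt (fun x : E (m + 1) => b * lastc x) (b • ℓ) x₀ := by
        have he : (fun x : E (m + 1) => b * lastc x) = fun x => (b • ℓ) x := by
          funext x
          simp [hℓapp x]
        rw [he]
        exact (b • ℓ).hasFDerivAt
      have h1 : HasFDerivAt (fun x : E (m + 1) => u x₀ + L (x - x₀) + b * lastc x)
          (L + b • ℓ) x₀ := (hL1.const_add (u x₀)).add hb
      have hfe : (fun x : E (m + 1) => u x₀ + L (x - x₀) +
          (C' * ‖x - x₀‖ ^ 2 + (b * lastc x - ε * K * lastc x ^ 2)))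
          = fun x : E (m + 1) => (u x₀ + L (x - x₀) + b * lastc x) +
            (C' * ‖x - x₀‖ ^ 2 + (-(ε * K)) * lastc x ^ 2) := by
        funext x; ring
      rw [hfe]
      have := h1.add (hasFDerivAt_quad h0 C' (-(ε * K)))
      rw [add_zero] at this
      exact this
    set δ' : ℝ := min δ (min rp (min rm (1 / K))) with hδ'
    have hδ'pos : 0 < δ' := lt_min hδ (lt_min hrp (lt_min hrm (by positivity)))
    have hδ'δ : δ' ≤ δ := min_le_left _ _
    have hδ'rp : δ' ≤ rp := le_trans (min_le_right _ _) (min_le_left _ _)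
    have hδ'rm : δ' ≤ rm :=
      le_trans (min_le_right _ _) (le_trans (min_le_right _ _) (min_le_left _ _))
    have hδ'K : δ' ≤ 1 / K :=
      le_trans (min_le_right _ _) (le_trans (min_le_right _ _) (min_le_right _ _))
    have hspl : ∀ x ∈ closure (ball x₀ δ' ∩ Hp m), 0 ≤ lastc x :=
      fun x hx => ((closure_Hp_subset x₀ δ') hx).2
    have hsml : ∀ x ∈ closure (ball x₀ δ' ∩ Hm m), lastc x ≤ 0 :=
      fun x hx => ((closure_Hm_subset x₀ δ') hx).2
    have hQcp : ContDiffOn ℝ 2 Q (closure (ball x₀ δ' ∩ Hp m)) :=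
      ((hsmooth Lp ε).contDiffOn).congr fun x hx => hQp x (hspl x hx)
    have hQcm : ContDiffOn ℝ 2 Q (closure (ball x₀ δ' ∩ Hm m)) :=
      ((hsmooth Lm (-ε)).contDiffOn).congr fun x hx => hQm x (hsml x hx)
    have hQdp : HasFDerivWithinAt Q Lp' (closure (ball x₀ δ' ∩ Hp m)) x₀ :=
      ((hsder Lp ε).hasFDerivWithinAt).congr (fun x hx => hQp x (hspl x hx))
        (hQp x₀ (le_of_eq h0.symm))
    have hQdm : HasFDerivWithinAt Q Lm' (closure (ball x₀ δ' ∩ Hm m)) x₀ := by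
      have h1 := ((hsder Lm (-ε)).hasFDerivWithinAt
        (s := closure (ball x₀ δ' ∩ Hm m))).congr (fun x hx => hQm x (hsml x hx))
        (hQm x₀ (le_of_eq h0))
      have h2 : Lm + (-ε) • ℓ = Lm' := by
        rw [hLm']
        ext x
        simp [sub_eq_add_neg]
      rwa [h2] at h1
    have hquadAp : ∀ v : E (m + 1), quadForm Ap v = 2 * C' * ‖v‖ ^ 2 - 2 * ε * K * lastc v ^ 2 := by
      intro v
      have h1 : quadForm Ap v = quadForm B v - quadForm N v := by
        simp only [hAp, quadForm, Matrix.sub_apply, sub_mul, Finset.sum_sub_distrib]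
      rw [h1, hB, hN, quadForm_smul_one, quadForm_lastMat]
    have hHp2 : HasHessianWithinAt Q Lp' Ap (closure (ball x₀ δ' ∩ Hp m)) x₀ := by
      unfold HasHessianWithinAt
      have hzero : ∀ x ∈ closure (ball x₀ δ' ∩ Hp m),
          Q x - Q x₀ - Lp' (x - x₀) - 1 / 2 * quadForm Ap (x - x₀) = 0 := by
        intro x hx
        have h1 := hQp x (hspl x hx)
        have h2 : Lp' (x - x₀) = Lp (x - x₀) + ε * lastc x := by
          simp only [hLp', ContinuousLinearMap.add_apply, ContinuousLinearMap.coe_smul',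
            Pi.smul_apply, smul_eq_mul, hℓapp, lastc_sub, h0, sub_zero]
        have h3 := hquadAp (x - x₀)
        have h4 : lastc (x - x₀) = lastc x := by rw [lastc_sub, h0, sub_zero]
        rw [h1, hQx₀, h2, h3, h4]
        ring
      exact (Filter.eventuallyEq_of_mem self_mem_nhdsWithin hzero).trans_isLittleO
        (isLittleO_zero _ _)
    have hHm2 : HasHessianWithinAt Q Lm' Ap (closure (ball x₀ δ' ∩ Hm m)) x₀ := by
      unfold HasHessianWithinAt
      have hzero : ∀ x ∈ closure (ball x₀ δ' ∩ Hm m),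
          Q x - Q x₀ - Lm' (x - x₀) - 1 / 2 * quadForm Ap (x - x₀) = 0 := by
        intro x hx
        have h1 := hQm x (hsml x hx)
        have h2 : Lm' (x - x₀) = Lm (x - x₀) - ε * lastc x := by
          simp only [hLm', ContinuousLinearMap.sub_apply, ContinuousLinearMap.coe_smul',
            Pi.smul_apply, smul_eq_mul, hℓapp, lastc_sub, h0, sub_zero]
        have h3 := hquadAp (x - x₀)
        have h4 : lastc (x - x₀) = lastc x := by rw [lastc_sub, h0, sub_zero]
        rw [h1, hQx₀, h2, h3, h4]
        ring
      exact (Filter.eventuallyEq_of_mem self_mem_nhdsWithin hzero).trans_isLittleO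
        (isLittleO_zero _ _)
    have hQcont : Continuous Q := by
      have hlc : Continuous (fun x : E (m + 1) => lastc x) := continuous_lastc
      simp only [hQ]
      exact ((((continuous_const.add
        (Lm.continuous.comp (continuous_id.sub continuous_const))).add
        (continuous_const.mul (hlc.max continuous_const))).add
        (continuous_const.mul ((continuous_id.sub continuous_const).norm.pow 2))).add
        (continuous_const.mul hlc.abs)).sub (continuous_const.mul (hlc.pow 2))
    have htouch : ∀ x ∈ ball x₀ δ', u x ≤ Q x := by
      intro x hx
      have hxδ : x ∈ ball x₀ δ := mem_ball.mpr (lt_of_lt_of_le (mem_ball.mp hx) hδ'δ)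
      have hxn : ‖x - x₀‖ < δ' := by rw [← dist_eq_norm]; exact mem_ball.mp hx
      have huφ : u x ≤ φ x := habove x hxδ
      have habs : |lastc x| ≤ ‖x - x₀‖ := by
        have h1 := abs_lastc_le (x - x₀)
        rwa [lastc_sub, h0, sub_zero] at h1
      have hKl : K * |lastc x| ≤ 1 := by
        have h1 : |lastc x| ≤ 1 / K := le_trans habs (le_trans hxn.le hδ'K)
        calc K * |lastc x| ≤ K * (1 / K) := mul_le_mul_of_nonneg_left h1 hKpos.le
          _ = 1 := by field_simp
      rcases le_or_gt 0 (lastc x) with hsgn | hsgn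
      · have hxcl : x ∈ closure (ball x₀ δ ∩ Hp m) := by
          rcases eq_or_lt_of_le hsgn with heq0 | hpos0
          · exact mem_closure_Hp hxδ heq0.symm
          · exact subset_closure ⟨hxδ, hpos0⟩
        have hT := hTp x hxcl (le_trans hxn.le hδ'rp)
        rw [hQp x hsgn]
        have h1 : φ x ≤ φ x₀ + Lp (x - x₀) + Cp * ‖x - x₀‖ ^ 2 := by
          have h2 := (abs_le.mp hT).2
          linarith
        have h2 : Cp * ‖x - x₀‖ ^ 2 ≤ C' * ‖x - x₀‖ ^ 2 :=
          mul_le_mul_of_nonneg_right (le_max_left _ _) (sq_nonneg _)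
        have habs2 : |lastc x| = lastc x := abs_of_nonneg hsgn
        have h5 : (0 : ℝ) ≤ 1 - K * lastc x := by rw [← habs2]; linarith
        have h3 : 0 ≤ ε * lastc x - ε * K * lastc x ^ 2 := by
          nlinarith [mul_nonneg (mul_nonneg hε.le hsgn) h5]
        rw [heq] at h1
        linarith
      · have hxcl : x ∈ closure (ball x₀ δ ∩ Hm m) := subset_closure ⟨hxδ, hsgn⟩
        have hT := hTm x hxcl (le_trans hxn.le hδ'rm)
        rw [hQm x hsgn.le]
        have h1 : φ x ≤ φ x₀ + Lm (x - x₀) + Cm * ‖x - x₀‖ ^ 2 := by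
          have h2 := (abs_le.mp hT).2
          linarith
        have h2 : Cm * ‖x - x₀‖ ^ 2 ≤ C' * ‖x - x₀‖ ^ 2 :=
          mul_le_mul_of_nonneg_right (le_max_right _ _) (sq_nonneg _)
        have habs2 : |lastc x| = -lastc x := abs_of_nonpos hsgn.le
        have h5 : (0 : ℝ) ≤ 1 + K * lastc x := by
          have h6 : K * |lastc x| = -(K * lastc x) := by rw [habs2]; ring
          linarith [hKl, h6.le, h6.ge]
        have h3 : 0 ≤ (-ε) * lastc x - ε * K * lastc x ^ 2 := by
          nlinarith [mul_nonneg (mul_nonneg hε.le (neg_nonneg.mpr hsgn.le)) h5]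
        rw [heq] at h1
        linarith
    have hdisj := H δ' hδ'pos Q Lp' Lm' Ap Ap hQcont.continuousOn hQcp hQcm hQdp hQdm
      hHp2 hHm2 hQx₀ htouch
    rcases hdisj with h | h | h
    · exact absurd h (not_le.mpr hFpAp)
    · exact absurd h (not_le.mpr hFmAp)
    · have h1 : Lp' (en m) = Lp (en m) + ε := by
        simp only [hLp', ContinuousLinearMap.add_apply, ContinuousLinearMap.coe_smul',
          Pi.smul_apply, smul_eq_mul, hℓapp, lastc_en, mul_one]
      have h2 : Lm' (en m) = Lm (en m) - ε := by
        simp only [hLm', ContinuousLinearMap.sub_apply, ContinuousLinearMap.coe_smul',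
          Pi.smul_apply, smul_eq_mul, hℓapp, lastc_en, mul_one]
      rw [h1, h2] at h
      rw [ha]
      linarith
  refine le_of_forall_pos_le_add fun ε hε => ?_
  have h1 := main (ε / 2) (by linarith)
  linarith


/-- **Equivalent characterization of viscosity subsolutions of the flat transmission
problem** (Lemma 4.2). -/
theorem flat_subsolution_equivalence (m : ℕ) (hm : 1 ≤ m) (lam Lam : ℝ)
    (hlam : 0 < lam) (hlL : lam ≤ Lam)
    (Fp Fm : Matrix (Fin (m + 1)) (Fin (m + 1)) ℝ → ℝ)
    (hFp : UniformlyElliptic lam Lam Fp) (hFm : UniformlyElliptic lam Lam Fm)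
    (fp fm g : E (m + 1) → ℝ)
    (hfp : ContinuousOn fp (BpR m 1 ∪ TR m 1))
    (hfm : ContinuousOn fm (BmR m 1 ∪ TR m 1))
    (u : E (m + 1) → ℝ)
    (husc : UpperSemicontinuousOn u (ball (0 : E (m + 1)) 1)) :
    FlatSub 1 Fp Fm fp fm g u ↔
      (ViscSubOn Fp fp u (BpR m 1) ∧ ViscSubOn Fm fm u (BmR m 1) ∧
        ∀ x₀ ∈ TR m 1, ∀ δ > (0 : ℝ), ∀ φ : E (m + 1) → ℝ,
          ∀ Lp Lm : E (m + 1) →L[ℝ] ℝ, ∀ Ap Am : Matrix (Fin (m + 1)) (Fin (m + 1)) ℝ,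
          ContinuousOn φ (ball x₀ δ) →
          ContDiffOn ℝ 2 φ (closure (ball x₀ δ ∩ Hp m)) →
          ContDiffOn ℝ 2 φ (closure (ball x₀ δ ∩ Hm m)) →
          HasFDerivWithinAt φ Lp (closure (ball x₀ δ ∩ Hp m)) x₀ →
          HasFDerivWithinAt φ Lm (closure (ball x₀ δ ∩ Hm m)) x₀ →
          HasHessianWithinAt φ Lp Ap (closure (ball x₀ δ ∩ Hp m)) x₀ →
          HasHessianWithinAt φ Lm Am (closure (ball x₀ δ ∩ Hm m)) x₀ →
          φ x₀ = u x₀ → (∀ x ∈ ball x₀ δ, u x ≤ φ x) →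
          (fp x₀ ≤ Fp Ap ∨ fm x₀ ≤ Fm Am ∨ g x₀ ≤ Lp (en m) - Lm (en m))) := by
  constructor
  · rintro ⟨husc', hsp, hsm, htr⟩
    refine ⟨hsp, hsm, fun x₀ hx₀ δ hδ φ Lp Lm Ap Am hc h2p h2m hLp hLm _ _ heq hab => ?_⟩
    exact Or.inr (Or.inr (htr x₀ hx₀ δ hδ φ Lp Lm hc h2p h2m hLp hLm heq hab))
  · rintro ⟨hsp, hsm, h3⟩
    exact ⟨husc, hsp, hsm, fun x₀ hx₀ =>
      trans_from_disj hlam hFp hFm hx₀.2 (h3 x₀ hx₀)⟩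

end Transmission
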